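/- Let μ and κ be infinite cardinals, λ a nonzero cardinal, I = ^λ([μ]^{<κ}), and let X = ∏_{j∈J} X_j be a product of nonempty topological spaces. Then X satisfies R(λ,μ;<κ) if and only if for every choice, for each j ∈ J, of an I-indexed sequence (x_{f,j})_{f∈I} of elements of X_j, there exists a single functionally regular ultrafilter D over I such that for every j ∈ J the sequence (x_{f,j})_{f∈I} has a D-limit point in X_j. -/

import Mathlib

open Cardinal Set Filter

universe u

/-- `X` satisfies `R(λ,μ;<κ)` where the index set `λ` is (the cardinality of) the type `L`:
for every `L`-indexed sequence of open covers of `X`, each of cardinality `≤ mu`, one can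
select subfamilies of cardinality `< kappa` whose union is a cover of `X`. -/
def SatisfiesR (X : Type u) [TopologicalSpace X] (L : Type u) (mu kappa : Cardinal.{u}) : Prop :=
  ∀ U : L → Set (Set X),
    (∀ a, ∀ u ∈ U a, IsOpen u) →
    (∀ a, ⋃₀ U a = Set.univ) →
    (∀ a, #(U a) ≤ mu) →
    ∃ V : L → Set (Set X),
      (∀ a, V a ⊆ U a) ∧ (∀ a, #(V a) < kappa) ∧ ⋃₀ (⋃ a, V a) = Set.univ

/-- `p` is an `F`-limit point of the sequence `x`. -/
def IsFLimit {I : Type*} {X : Type*} [TopologicalSpace X] (F : Filter I) (x : I → X) (p : X) : Prop :=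
  ∀ U : Set X, IsOpen U → p ∈ U → {i | x i ∈ U} ∈ F

/-- An ultrafilter `D` over `I = ^λ([μ]^{<κ})` (functions from `L` to subsets of `M` of
cardinality `< kappa`) is functionally regular if there is `a : L` such that
`{f | b ∈ f a} ∈ D` for every `b : M`. -/
def FunReg {L M : Type u} (kappa : Cardinal.{u})
    (D : Ultrafilter (L → {s : Set M // #s < kappa})) : Prop :=
  ∃ a : L, ∀ b : M, {f : L → {s : Set M // #s < kappa} | b ∈ (f a : Set M)} ∈ D

/-!
Limits in a product are computed coordinatewise, so it suffices to treat a single space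
`X`. Write `I = ^λ([μ]^{<κ})`. An ultrafilter on `I` is functionally regular iff it refines,
for some `a`, the filter generated by the sets `{f | b ∈ f a}`; so the right-hand side says
that every `y : I → X` has a cluster point along one of these filters.

If `X` satisfies `R(λ,μ;<κ)` but `y` has no such cluster point, then for each `a` the
complements of the closures of `y '' {f | S ⊆ f a}`, `S` finite, form an open cover of size
`≤ μ`. Choose `< κ` of them for each `a` and let `F a` be the union of the corresponding
finite sets `S`: then `y F` lies in none of the chosen sets. Conversely, enumerate the given
covers as `U_a(b)`, `b < μ`. If no `f ∈ I` selects a subcover `{U_a(b) | b ∈ f a}`, pick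
`y f` outside it; a cluster point of `y` along the filter for `a` lies in some `U_a(b)`,
hence so does `y f` for some `f` with `b ∈ f a`, a contradiction.
-/

open Topology Function

theorem isFLimit_iff_tendsto {I X : Type*} [TopologicalSpace X] {F : Filter I} {x : I → X}
    {p : X} : IsFLimit F x p ↔ Tendsto x F (𝓝 p) := by
  rw [(nhds_basis_opens p).tendsto_right_iff]
  exact ⟨fun h U hU => h U hU.2 hU.1, fun h U hU hpU => h U ⟨hpU, hU⟩⟩

theorem isFLimit_pi_iff {I ι : Type*} {X : ι → Type*} [∀ i, TopologicalSpace (X i)]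
    {F : Filter I} {x : I → ∀ i, X i} {p : ∀ i, X i} :
    IsFLimit F x p ↔ ∀ i, IsFLimit F (fun k => x k i) (p i) := by
  simp only [isFLimit_iff_tendsto, tendsto_pi_nhds]

theorem mk_iUnion_finset_lt {ι M : Type u} {kappa : Cardinal.{u}} (hkappa : ℵ₀ ≤ kappa)
    (hι : #ι < kappa) (S : ι → Finset M) : #(⋃ i, (S i : Set M)) < kappa := by
  rcases lt_or_ge #ι ℵ₀ with hfin | hinf
  · have : Finite ι := mk_lt_aleph0_iff.mp hfin
    exact (finite_iUnion fun i => (S i).finite_toSet).lt_aleph0.trans_le hkappa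
  · calc #(⋃ i, (S i : Set M)) ≤ #ι * ⨆ i, #(S i : Set M) := mk_iUnion_le _
      _ ≤ #ι * ℵ₀ := by gcongr; exact ciSup_le' fun i => (S i).finite_toSet.lt_aleph0.le
      _ = #ι := mul_aleph0_eq hinf
      _ < kappa := hι

section

variable {L M : Type u} {kappa : Cardinal.{u}} {Y : Type u} [TopologicalSpace Y]

local notation "𝕀" => L → {s : Set M // #s < kappa}

variable (kappa) in
def funRegFilter (a : L) : Filter 𝕀 :=
  ⨅ b : M, 𝓟 {f | b ∈ (f a : Set M)}

theorem funReg_iff_exists_le_funRegFilter (D : Ultrafilter 𝕀) :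
    FunReg kappa D ↔ ∃ a, (D : Filter 𝕀) ≤ funRegFilter kappa a := by
  simp only [FunReg, funRegFilter, le_iInf_iff, le_principal_iff, Ultrafilter.mem_coe]

theorem hasBasis_funRegFilter (a : L) :
    (funRegFilter kappa a).HasBasis (fun _ : Finset M => True)
      fun S => {f : 𝕀 | ↑S ⊆ (f a : Set M)} := by
  refine ⟨fun U => (mem_iInf_finite _).trans ?_⟩
  simp [iInf_principal_finset, Set.subset_def]

theorem exists_funReg_isFLimit_iff (y : 𝕀 → Y) :
    (∃ D : Ultrafilter 𝕀, FunReg kappa D ∧ ∃ p, IsFLimit (D : Filter 𝕀) y p) ↔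
      ∃ a p, MapClusterPt p (funRegFilter kappa a) y := by
  simp only [mapClusterPt_iff_ultrafilter, funReg_iff_exists_le_funRegFilter,
    isFLimit_iff_tendsto]
  exact ⟨fun ⟨D, ⟨a, hDa⟩, p, hp⟩ => ⟨a, p, D, hDa, hp⟩,
    fun ⟨a, p, D, hDa, hp⟩ => ⟨D, ⟨a, hDa⟩, p, hp⟩⟩

theorem exists_mapClusterPt_of_satisfiesR [Infinite M] (hkappa : ℵ₀ ≤ kappa)
    (hR : SatisfiesR Y L #M kappa) (y : 𝕀 → Y) :
    ∃ a p, MapClusterPt p (funRegFilter kappa a) y := by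
  by_contra! h
  simp only [MapClusterPt, ((hasBasis_funRegFilter _).map y).clusterPt_iff_forall_mem_closure,
    forall_const, not_forall] at h
  set C : L → Finset M → Set Y := fun a S => closure (y '' {f | ↑S ⊆ (f a : Set M)})
  obtain ⟨V, hVU, hVcard, hVcover⟩ := hR (fun a => range fun S => (C a S)ᶜ)
    (by rintro a _ ⟨S, rfl⟩; exact isClosed_closure.isOpen_compl)
    (fun a => eq_univ_of_forall fun p => by
      obtain ⟨S, hS⟩ := h a p
      exact ⟨_, ⟨S, rfl⟩, hS⟩)
    (fun a => mk_range_le.trans (mk_finset_of_infinite M).le)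
  choose S hS using fun a (v : V a) => hVU a v.2
  let F : 𝕀 := fun a => ⟨⋃ v, (S a v : Set M), mk_iUnion_finset_lt hkappa (hVcard a) _⟩
  obtain ⟨v, hv, hFv⟩ := hVcover.symm ▸ mem_univ (y F)
  obtain ⟨a, hva⟩ := mem_iUnion.mp hv
  rw [← show (C a (S a ⟨v, hva⟩))ᶜ = v from hS a ⟨v, hva⟩] at hFv
  exact hFv <| subset_closure <|
    mem_image_of_mem y (subset_iUnion (fun v => (S a v : Set M)) _)

theorem satisfiesR_of_forall_exists_mapClusterPt (hkappa : kappa ≠ 0)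
    (h : ∀ y : 𝕀 → Y, ∃ a p, MapClusterPt p (funRegFilter kappa a) y) :
    SatisfiesR Y L #M kappa := by
  intro U hUopen hUcover hUcard
  rcases isEmpty_or_nonempty Y with hY | hY
  · exact ⟨fun _ => ∅, fun _ => empty_subset _, fun _ => by simpa [pos_iff_ne_zero],
      eq_univ_of_forall isEmptyElim⟩
  have hne : ∀ a, Nonempty (U a) := fun a => by
    obtain ⟨s, hs, -⟩ := sUnion_eq_univ_iff.mp (hUcover a) hY.some
    exact ⟨⟨s, hs⟩⟩
  choose u hu using fun a =>
    exists_surjective_iff.2 ⟨⟨fun _ => Classical.arbitrary (U a)⟩, hUcard a⟩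
  suffices ∃ f : 𝕀, ∀ z, ∃ a, ∃ b ∈ (f a : Set M), z ∈ (u a b : Set Y) by
    obtain ⟨f, hf⟩ := this
    refine ⟨fun a => (fun b => (u a b : Set Y)) '' f a, fun a => ?_,
      fun a => mk_image_le.trans_lt (f a).2, ?_⟩
    · rintro _ ⟨b, -, rfl⟩
      exact (u a b).2
    · refine eq_univ_of_forall fun z => ?_
      obtain ⟨a, b, hb, hz⟩ := hf z
      exact ⟨_, mem_iUnion_of_mem a (mem_image_of_mem _ hb), hz⟩
  by_contra! hz
  choose z hz using hz
  obtain ⟨a, p, hp⟩ := h z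
  obtain ⟨s, hs, hps⟩ := sUnion_eq_univ_iff.mp (hUcover a) p
  obtain ⟨b, hb⟩ := hu a ⟨s, hs⟩
  obtain ⟨f, hfz, hfb⟩ := (hp.frequently ((hUopen a s hs).mem_nhds hps)).and_eventually
    (mem_iInf_of_mem b (mem_principal_self _) : {f | b ∈ (f a : Set M)} ∈ funRegFilter kappa a)
    |>.exists
  exact hz f a b hfb (hb ▸ hfz)

theorem satisfiesR_iff_forall_exists_funReg_isFLimit [Infinite M] (hkappa : ℵ₀ ≤ kappa) :
    SatisfiesR Y L #M kappa ↔ ∀ y : 𝕀 → Y,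
      ∃ D : Ultrafilter 𝕀, FunReg kappa D ∧ ∃ p, IsFLimit (D : Filter 𝕀) y p := by
  simp only [exists_funReg_isFLimit_iff]
  exact ⟨exists_mapClusterPt_of_satisfiesR hkappa,
    satisfiesR_of_forall_exists_mapClusterPt (aleph0_pos.trans_le hkappa).ne'⟩

end

theorem stmt7_general (L M : Type u) [Infinite M]
    (kappa : Cardinal.{u}) (hkappa : ℵ₀ ≤ kappa)
    (J : Type u) (X : J → Type u) [∀ j, TopologicalSpace (X j)] :
    SatisfiesR (∀ j, X j) L (#M) kappa ↔
      ∀ x : ∀ j : J, (L → {s : Set M // #s < kappa}) → X j,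
        ∃ D : Ultrafilter (L → {s : Set M // #s < kappa}),
          FunReg kappa D ∧ ∀ j : J, ∃ p : X j, IsFLimit (D : Filter _) (x j) p := by
  rw [satisfiesR_iff_forall_exists_funReg_isFLimit hkappa]
  simp only [isFLimit_pi_iff, Classical.skolem (p := fun j q => IsFLimit _ _ q)]
  exact ⟨fun h x => h fun f j => x j f, fun h y => h fun j f => y f j⟩

/-- Corollary 1.5 (1)⇔(2): a product satisfies `R(λ,μ;<κ)` (with `μ = #M` infinite and
`κ` infinite) iff for every choice of `I`-indexed sequences, one in each factor, there is
a single functionally regular ultrafilter `D` over `I = ^λ([μ]^{<κ})` such that each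
sequence has a `D`-limit point in its factor. -/
theorem stmt7 (L M : Type u) [Nonempty L] [Infinite M]
    (kappa : Cardinal.{u}) (hkappa : ℵ₀ ≤ kappa)
    (J : Type u) (X : J → Type u) [∀ j, TopologicalSpace (X j)] [∀ j, Nonempty (X j)] :
    SatisfiesR (∀ j, X j) L (#M) kappa ↔
      ∀ x : ∀ j : J, (L → {s : Set M // #s < kappa}) → X j,
        ∃ D : Ultrafilter (L → {s : Set M // #s < kappa}),
          FunReg kappa D ∧ ∀ j : J, ∃ p : X j, IsFLimit (D : Filter _) (x j) p :=
  stmt7_general L M kappa hkappa J X
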